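/- Let G be a finite group generated by two subnormal supersoluble subgroups A and B, and let p be the largest prime dividing |G|. If A_p and B_p are Sylow p-subgroups of A and B respectively, then the subgroup generated by A_p and B_p is contained in O_p(G). -/

import Mathlib

/-!
A Sylow `p`-subgroup `P` of a subnormal supersoluble subgroup `C` is normal in `C`, hence
subnormal in `G`, and a subnormal `p`-subgroup lies in `O_p(G)` (induct along a normal subgroup
containing it, using that `O_p` of a normal subgroup is normal).

Normality of `P` in a supersoluble group whose largest prime divisor is `p` goes by induction on
the order: there is a normal subgroup `N` of prime order `q ≤ p`, by induction `PN` is normal, and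
`N` normalises `P` (for `q = p`, `N ≤ P`; for `q < p`, `P` centralises `N`). The Frattini argument
for `P ≤ PN ⊴ G` then gives `N_G(P) = G`.
-/

/-- A subgroup `H` of `G` is subnormal if there is a chain
`H = c 0 ≤ c 1 ≤ ... ≤ c n = G` with each term normal in the next. -/
def Subgroup.IsSubnormal' {G : Type*} [Group G] (H : Subgroup G) : Prop :=
  ∃ (n : ℕ) (c : Fin (n + 1) → Subgroup G),
    c 0 = H ∧ c (Fin.last n) = ⊤ ∧
    ∀ i : Fin n, c i.castSucc ≤ c i.succ ∧
      ((c i.castSucc).subgroupOf (c i.succ)).Normal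

/-- A group is supersoluble if it has a normal series (all terms normal in `G`)
with cyclic factors; the factor `c (i+1) / c i` being cyclic is expressed as
`c (i+1)` being generated by `c i` together with a single element. -/
def IsSupersolvable (G : Type*) [Group G] : Prop :=
  ∃ (n : ℕ) (c : Fin (n + 1) → Subgroup G),
    c 0 = ⊥ ∧ c (Fin.last n) = ⊤ ∧
    (∀ i, (c i).Normal) ∧
    ∀ i : Fin n, c i.castSucc ≤ c i.succ ∧
      ∃ g ∈ c i.succ, c i.succ ≤ c i.castSucc ⊔ Subgroup.zpowers g

/-- The Fitting subgroup: the join of all normal nilpotent subgroups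
(in a finite group, the largest normal nilpotent subgroup). -/
def fittingSubgroup (G : Type*) [Group G] : Subgroup G :=
  sSup {N : Subgroup G | N.Normal ∧ Group.IsNilpotent N}

instance fittingSubgroup_normal (G : Type*) [Group G] : (fittingSubgroup G).Normal := by
  constructor
  intro x hx g
  rw [fittingSubgroup, sSup_eq_iSup'] at hx ⊢
  refine Subgroup.iSup_induction
    (C := fun y => g * y * g⁻¹ ∈
      ⨆ (N : {N : Subgroup G // N.Normal ∧ Group.IsNilpotent N}), (N : Subgroup G))
    _ hx (fun N y hy => ?_) (by simpa using Subgroup.one_mem _) (fun y z hy hz => ?_)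
  · exact Subgroup.mem_iSup_of_mem N (N.2.1.conj_mem y hy g)
  · simpa [mul_assoc] using Subgroup.mul_mem _ hy hz

/-- `O_p(G)`: the join of all normal `p`-subgroups
(in a finite group, the largest normal `p`-subgroup). -/
def pCore (p : ℕ) (G : Type*) [Group G] : Subgroup G :=
  sSup {N : Subgroup G | N.Normal ∧ IsPGroup p N}

instance pCore_normal (p : ℕ) (G : Type*) [Group G] : (pCore p G).Normal := by
  constructor
  intro x hx g
  rw [pCore, sSup_eq_iSup'] at hx ⊢
  refine Subgroup.iSup_induction
    (C := fun y => g * y * g⁻¹ ∈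
      ⨆ (N : {N : Subgroup G // N.Normal ∧ IsPGroup p N}), (N : Subgroup G))
    _ hx (fun N y hy => ?_) (by simpa using Subgroup.one_mem _) (fun y z hy hz => ?_)
  · exact Subgroup.mem_iSup_of_mem N (N.2.1.conj_mem y hy g)
  · simpa [mul_assoc] using Subgroup.mul_mem _ hy hz

/-- `G` has a Sylow tower of supersoluble type: a normal series `⊥ = c 0 ≤ ... ≤ c n = ⊤`
(all terms normal in `G`) together with strictly decreasing primes `p 0 > p 1 > ... `
exhausting the primes dividing `|G|`, such that each factor `c (i+1) / c i` is a
Sylow `p i`-subgroup of `G / c i` (i.e. has order the full `p i`-part of `|G|`). -/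
def HasSupersolubleSylowTower (G : Type*) [Group G] : Prop :=
  ∃ (n : ℕ) (c : Fin (n + 1) → Subgroup G) (p : Fin n → ℕ),
    c 0 = ⊥ ∧ c (Fin.last n) = ⊤ ∧
    (∀ i, (c i).Normal) ∧
    (∀ i : Fin n, c i.castSucc ≤ c i.succ) ∧
    (∀ i, (p i).Prime) ∧
    (∀ i j : Fin n, i < j → p j < p i) ∧
    (∀ q : ℕ, q.Prime → q ∣ Nat.card G → ∃ i, p i = q) ∧
    (∀ i : Fin n,
      Nat.card (c i.succ) = Nat.card (c i.castSucc) * p i ^ (Nat.card G).factorization (p i))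


open Subgroup

section

variable {G : Type*} [Group G]

theorem Subgroup.IsSubnormal'.isSubnormal {H : Subgroup G} (h : H.IsSubnormal') :
    H.IsSubnormal := by
  obtain ⟨n, c, rfl, htop, hstep⟩ := h
  exact Fin.reverseInduction (motive := fun i => (c i).IsSubnormal) (htop ▸ .top)
    (fun i hi => .step _ _ (hstep i).1 hi (hstep i).2) 0

theorem le_pCore {p : ℕ} {N : Subgroup G} (hN : N.Normal) (hNp : IsPGroup p N) :
    N ≤ pCore p G :=
  le_sSup ⟨hN, hNp⟩

theorem isPGroup_pCore (p : ℕ) [Finite G] : IsPGroup p (pCore p G) := by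
  have hclosed : SupClosed {N : Subgroup G | N.Normal ∧ IsPGroup p N} := by
    rintro N ⟨hN, hNp⟩ M ⟨hM, hMp⟩
    exact ⟨sup_normal N M, hNp.to_sup_of_normal_right hMp⟩
  exact (hclosed.sSup_mem (Set.toFinite _) ⟨normal_bot, .of_bot⟩ subset_rfl).2

instance pCore_characteristic (p : ℕ) [Finite G] : (pCore p G).Characteristic :=
  characteristic_iff_map_le.mpr fun φ =>
    le_pCore ((pCore_normal p G).map _ φ.surjective) ((isPGroup_pCore p).map _)

theorem IsPGroup.le_pCore_of_isSubnormal {p : ℕ} [Finite G] {P : Subgroup G}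
    (hP : IsPGroup p P) (hsn : P.IsSubnormal) : P ≤ pCore p G := by
  induction hcard : Nat.card G using Nat.strong_induction_on generalizing G with
  | _ n ih =>
  obtain rfl | ⟨K, hK, hPK, hKtop⟩ := hsn.lt_normal
  · exact le_pCore normal_top hP
  have hcardK : Nat.card K < n :=
    hcard ▸ (card_le_card_group K).lt_of_ne ((card_eq_iff_eq_top K).not.mpr hKtop.ne)
  have hPK' : P.subgroupOf K ≤ pCore p K :=
    ih _ hcardK hP.comap_subtype hsn.subgroupOf rfl
  calc P = (P.subgroupOf K).map K.subtype := (map_subgroupOf_eq_of_le hPK).symm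
    _ ≤ (pCore p K).map K.subtype := map_mono hPK'
    _ ≤ pCore p G := le_pCore inferInstance ((isPGroup_pCore p).map _)

theorem IsSupersolvable.of_surjective {H : Type*} [Group H] (hG : IsSupersolvable G)
    (f : G →* H) (hf : Function.Surjective f) : IsSupersolvable H := by
  obtain ⟨n, c, hbot, htop, hnormal, hstep⟩ := hG
  refine ⟨n, fun i => (c i).map f, by simp [hbot], by simp [htop, map_top_of_surjective f hf],
    fun i => (hnormal i).map f hf, fun i => ?_⟩
  obtain ⟨hle, g, hg, hcyc⟩ := hstep i
  refine ⟨map_mono hle, f g, mem_map_of_mem f hg, ?_⟩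
  simpa only [Subgroup.map_sup, MonoidHom.map_zpowers] using map_mono (f := f) hcyc

theorem Subgroup.Normal.zpowers_zpow {g : G} (h : (zpowers g).Normal) (k : ℤ) :
    (zpowers (g ^ k)).Normal := by
  refine ⟨fun y hy x => ?_⟩
  obtain ⟨j, rfl⟩ := hy
  obtain ⟨i, hi⟩ := h.conj_mem g (mem_zpowers g) x
  refine ⟨i * j, ?_⟩
  simp only [← zpow_mul, ← conj_zpow, ← hi]
  ring_nf

theorem IsSupersolvable.exists_normal_zpowers_ne_one [Nontrivial G] (hG : IsSupersolvable G) :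
    ∃ g : G, g ≠ 1 ∧ (zpowers g).Normal := by
  obtain ⟨n, c, hbot, htop, hnormal, hstep⟩ := hG
  obtain ⟨i, hi, hi'⟩ : ∃ i : Fin n, c i.castSucc = ⊥ ∧ c i.succ ≠ ⊥ := by
    by_contra! h
    have hall : ∀ j, c j = ⊥ := fun j => Fin.induction hbot (fun i hi => h i hi) j
    exact bot_ne_top (htop ▸ hall (Fin.last n)).symm
  obtain ⟨-, g, hg, hcyc⟩ := hstep i
  have hcg : c i.succ = zpowers g :=
    le_antisymm (by simpa [hi] using hcyc) (zpowers_le.mpr hg)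
  refine ⟨g, fun h1 => hi' ?_, hcg ▸ hnormal i.succ⟩
  rw [hcg, h1, zpowers_one_eq_bot]

theorem IsSupersolvable.exists_normal_card_prime [Finite G] [Nontrivial G]
    (hG : IsSupersolvable G) : ∃ N : Subgroup G, N.Normal ∧ (Nat.card N).Prime := by
  obtain ⟨g, hg, hN⟩ := hG.exists_normal_zpowers_ne_one
  have hord : orderOf g ≠ 1 := orderOf_eq_one_iff.not.mpr hg
  set q := (orderOf g).minFac
  refine ⟨zpowers (g ^ (orderOf g / q)), ?_, ?_⟩
  · exact_mod_cast hN.zpowers_zpow ((orderOf g / q : ℕ) : ℤ)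
  · rw [Nat.card_zpowers, orderOf_pow_orderOf_div (orderOf_pos g).ne' (Nat.minFac_dvd _)]
    exact Nat.minFac_prime hord

end

section

variable {G : Type*} [Group G] {p : ℕ} [Fact p.Prime]

/-- `P` acts on `N` through `Aut N`, of order `|N| - 1 < p`, so the action is trivial. -/
theorem IsPGroup.le_centralizer_of_card_prime_lt {P N : Subgroup G} [N.Normal]
    (hP : IsPGroup p P) (hN : (Nat.card N).Prime) (hNp : Nat.card N < p) :
    P ≤ centralizer N := by
  have := Fact.mk hN
  have := isCyclic_of_prime_card (α := N) rfl
  have : Finite N := Nat.finite_of_card_ne_zero hN.ne_zero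
  obtain ⟨k, hk⟩ := (hP.map (MulAut.conjNormal (H := N))).exists_card_eq
  have hdvd : p ^ k ∣ Nat.card N - 1 := by
    rw [← hk, ← Nat.totient_prime hN, ← IsCyclic.card_mulAut]
    exact card_subgroup_dvd_card _
  have hk0 : k = 0 := by
    by_contra hk0
    have := Nat.le_of_dvd (by have := hN.two_le; omega) hdvd
    have := Nat.le_self_pow hk0 p
    omega
  have hker : P ≤ (MulAut.conjNormal (H := N)).ker :=
    (Subgroup.map_eq_bot_iff _).mp (card_eq_one.mp (by rw [hk, hk0, pow_zero]))
  intro x hx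
  rw [mem_centralizer_iff]
  intro n hn
  have hconj := congrArg (fun φ : MulAut N => (φ ⟨n, hn⟩ : G)) (hker hx)
  simp only [MulAut.conjNormal_apply, MulAut.one_apply] at hconj
  exact (mul_inv_eq_iff_eq_mul.mp hconj).symm

theorem IsSupersolvable.sylow_normal_of_forall_prime_le [Finite G] (hG : IsSupersolvable G)
    (hmax : ∀ q : ℕ, q.Prime → q ∣ Nat.card G → q ≤ p) (P : Sylow p G) :
    (P : Subgroup G).Normal := by
  induction hcard : Nat.card G using Nat.strong_induction_on generalizing G with
  | _ n ih =>
  cases subsingleton_or_nontrivial G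
  · exact Subsingleton.elim ⊤ (P : Subgroup G) ▸ normal_top
  obtain ⟨N, hN, hNprime⟩ := hG.exists_normal_card_prime
  have hmk := QuotientGroup.mk'_surjective N
  have hcardQ : Nat.card (G ⧸ N) < n := by
    have := card_eq_card_quotient_mul_card_subgroup N
    have := hNprime.two_le
    have : 0 < Nat.card (G ⧸ N) := Nat.card_pos
    nlinarith
  have hPN : ((P : Subgroup G) ⊔ N).Normal := by
    have hQ := ih _ hcardQ (hG.of_surjective _ hmk)
      (fun q hq hdvd => hmax q hq (hdvd.trans (card_quotient_dvd_card N)))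
      (P.mapSurjective hmk) rfl
    rw [Sylow.coe_mapSurjective] at hQ
    simpa only [comap_map_eq, QuotientGroup.ker_mk'] using hQ.comap (QuotientGroup.mk' N)
  have hNP : N ≤ normalizer P := by
    obtain hNp | hNp := (hmax _ hNprime (card_subgroup_dvd_card N)).eq_or_lt
    · exact ((IsPGroup.of_card (n := 1) (by rw [hNp, pow_one])).le_sylow_of_normal P).trans
        le_normalizer
    · exact (le_centralizer_iff.mp (P.2.le_centralizer_of_card_prime_lt hNprime hNp)).trans
        (centralizer_le_normalizer _)
  have hFrattini := Sylow.normalizer_sup_eq_top' (N := (P : Subgroup G) ⊔ N) P le_sup_left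
  rw [← normalizer_eq_top_iff, ← hFrattini]
  exact (sup_eq_left.mpr (sup_le le_normalizer hNP)).symm

theorem Sylow.map_subtype_le_pCore_of_isSupersolvable [Finite G] {C : Subgroup G} (hC : C.IsSubnormal) (hCs : IsSupersolvable C)
    (hmax : ∀ q : ℕ, q.Prime → q ∣ Nat.card G → q ≤ p) (P : Sylow p C) :
    (P : Subgroup C).map C.subtype ≤ pCore p G := by
  have hP : (P : Subgroup C).Normal := hCs.sylow_normal_of_forall_prime_le
    (fun q hq hdvd => hmax q hq (hdvd.trans (card_subgroup_dvd_card C))) P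
  exact (P.2.map _).le_pCore_of_isSubnormal (hP.isSubnormal.trans' hC)

end

theorem stmt_10_general {G : Type*} [Group G] [Finite G] (A B : Subgroup G)
    (hA : A.IsSubnormal') (hB : B.IsSubnormal')
    (hAs : IsSupersolvable A) (hBs : IsSupersolvable B)
    (p : ℕ) (hp : p.Prime)
    (hmax : ∀ q : ℕ, q.Prime → q ∣ Nat.card G → q ≤ p)
    (Ap : Sylow p A) (Bp : Sylow p B) :
    ((Ap : Subgroup A).map A.subtype) ⊔ ((Bp : Subgroup B).map B.subtype) ≤ pCore p G := by
  have := Fact.mk hp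
  exact sup_le (Ap.map_subtype_le_pCore_of_isSupersolvable hA.isSubnormal hAs hmax)
    (Bp.map_subtype_le_pCore_of_isSupersolvable hB.isSubnormal hBs hmax)

/-- If `G = ⟨A, B⟩` with `A`, `B` subnormal supersoluble and `p` is the largest
prime dividing `|G|`, then `⟨A_p, B_p⟩ ≤ O_p(G)` for Sylow `p`-subgroups
`A_p ≤ A`, `B_p ≤ B`. -/
theorem stmt_10 {G : Type*} [Group G] [Finite G] (A B : Subgroup G)
    (hA : A.IsSubnormal') (hB : B.IsSubnormal')
    (hAs : IsSupersolvable A) (hBs : IsSupersolvable B)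
    (hgen : A ⊔ B = ⊤)
    (p : ℕ) (hp : p.Prime) (hdvd : p ∣ Nat.card G)
    (hmax : ∀ q : ℕ, q.Prime → q ∣ Nat.card G → q ≤ p)
    (Ap : Sylow p A) (Bp : Sylow p B) :
    ((Ap : Subgroup A).map A.subtype) ⊔ ((Bp : Subgroup B).map B.subtype) ≤ pCore p G :=
  stmt_10_general A B hA hB hAs hBs p hp hmax Ap Bp
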